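/- For odd n ≥ 5, let SC(n) be the probability distribution on simple graphs with vertex set {1,...,n} defined as follows: each vertex is independently and uniformly colored red or blue; since n is odd, exactly one of the two colors is chosen by an even number of vertices, and the output graph is the clique on the vertices of that color, with no other edges. Then SC(n) is matching independent but not edge-subgraph independent. -/

import Mathlib

open scoped Classical

noncomputable def pr {n : ℕ} (μ : SimpleGraph (Fin n) → ℝ) (P : SimpleGraph (Fin n) → Prop) : ℝ :=
  ∑ G : SimpleGraph (Fin n), if P G then μ G else 0

def IsDist {n : ℕ} (μ : SimpleGraph (Fin n) → ℝ) : Prop :=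
  (∀ G, 0 ≤ μ G) ∧ ∑ G : SimpleGraph (Fin n), μ G = 1

def IsMatchingSet {n : ℕ} (M : Finset (Sym2 (Fin n))) : Prop :=
  (∀ e ∈ M, ¬ e.IsDiag) ∧
    ∀ e ∈ M, ∀ f ∈ M, e ≠ f → ∀ v : Fin n, v ∈ e → v ∉ f

def MatchingIndep {n : ℕ} (μ : SimpleGraph (Fin n) → ℝ) : Prop :=
  ∀ M : Finset (Sym2 (Fin n)), IsMatchingSet M →
    ∀ S ⊆ M, pr μ (fun G => ∀ e ∈ S, e ∈ G.edgeSet)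
      = ∏ e ∈ S, pr μ (fun G => e ∈ G.edgeSet)

def EdgeSubgraphIndep {n : ℕ} (μ : SimpleGraph (Fin n) → ℝ) : Prop :=
  ∀ u v : Fin n, u ≠ v → ∀ W : Set (Fin n), u ∉ W → v ∉ W →
    ∀ H : SimpleGraph W,
      pr μ (fun G => G.induce W = H ∧ G.Adj u v)
        = pr μ (fun G => G.induce W = H) * pr μ (fun G => G.Adj u v)

def scGraph {n : ℕ} (c : Fin n → Bool) : SimpleGraph (Fin n) where
  Adj u v := u ≠ v ∧ c u = c v ∧ Even (Finset.univ.filter (fun w => c w = c u)).card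
  symm := by
    constructor
    rintro u v ⟨h1, h2, h3⟩
    refine ⟨h1.symm, h2.symm, ?_⟩
    simp only [← h2]
    exact h3
  loopless := ⟨fun u h => h.1 rfl⟩

noncomputable def SC (n : ℕ) : SimpleGraph (Fin n) → ℝ := fun G =>
  ((Finset.univ.filter (fun c : Fin n → Bool => scGraph c = G)).card : ℝ) / 2 ^ n

/-!
A coloring `c` produces the clique on its color class of even size, the class of
`evenColor univ c`. A matching `S` lies in the graph iff all `2 * #S` matched vertices `T` carry
that color; as `#T` is even, this is the same as carrying the color whose class is even in the
odd set `Tᶜ`, a color determined by `c` off `T`. Hence exactly `2 ^ (n - 2 * #S)` colorings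
qualify, the event has probability `(1 / 4) ^ #S`, and this is multiplicative over `S`.
Since `n` is odd, not every vertex carries the even color; so for `W` the complement of `{u, v}`,
which has at least two vertices, the events "`W` is a clique" and "`uv` is an edge" are disjoint,
while both have positive probability.
-/

open Finset

section EvenColor

variable {α : Type*}

def evenColor (s : Finset α) (c : α → Bool) : Bool :=
  decide (Even #{a ∈ s | c a = true})

theorem even_card_filter_eq_iff {s : Finset α} (hs : Odd #s) (c : α → Bool) (b : Bool) :
    Even #{a ∈ s | c a = b} ↔ b = evenColor s c := by
  have hsplit := card_filter_add_card_filter_not (s := s) (fun a => c a = true)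
  simp only [Bool.not_eq_true] at hsplit
  rw [← hsplit, Nat.odd_add'] at hs
  cases b <;> simp [evenColor, ← Nat.not_odd_iff_even, hs]

theorem evenColor_congr {s : Finset α} {c d : α → Bool} (h : ∀ a ∈ s, c a = d a) :
    evenColor s c = evenColor s d := by
  rw [evenColor, evenColor, filter_congr fun a ha => by rw [h a ha]]

theorem forall_mem_eq_evenColor_univ_iff [Fintype α] [DecidableEq α] {T : Finset α}
    (hT : Even #T) (hα : Odd (Fintype.card α)) (c : α → Bool) :
    (∀ a ∈ T, c a = evenColor univ c) ↔ ∀ a ∈ T, c a = evenColor Tᶜ c := by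
  have hTc : Odd #Tᶜ := by
    rw [card_compl]; exact Nat.Odd.sub_even (card_le_univ T) hα hT
  have key (b : Bool) (hb : ∀ a ∈ T, c a = b) :
      b = evenColor univ c ↔ b = evenColor Tᶜ c := by
    have hsplit : #{a | c a = b} = #T + #{a ∈ Tᶜ | c a = b} := by
      rw [← card_filter_add_card_filter_not (s := {a | c a = b}) (· ∈ T)]
      congr 2 <;> ext a <;> by_cases a ∈ T <;> simp_all
    rw [← even_card_filter_eq_iff (by rwa [card_univ]), ← even_card_filter_eq_iff hTc,
      hsplit, Nat.even_add]
    simp [hT]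
  exact ⟨fun h a ha => h a ha ▸ (key _ h).1 rfl, fun h a ha => h a ha ▸ (key _ h).2 rfl⟩

end EvenColor

theorem card_filter_forall_mem_eq_of_eqOn_compl {α β : Type*} [Fintype α] [DecidableEq α]
    [Fintype β] [DecidableEq β] [Nonempty β] (T : Finset α) (φ : (α → β) → β)
    (hφ : ∀ c d, (∀ a ∉ T, c a = d a) → φ c = φ d) :
    #{c : α → β | ∀ a ∈ T, c a = φ c} = Fintype.card β ^ #Tᶜ := by
  obtain ⟨b₀⟩ := ‹Nonempty β›
  let fill (f : (α → β) → β) (c : α → β) : α → β :=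
    fun a => if a ∈ T then f c else c a
  have hφ_fill (b : β) (c : α → β) : φ (fun a => if a ∈ T then b else c a) = φ c :=
    hφ _ _ fun a ha => if_neg ha
  -- `fill (fun _ => b₀)` and `fill φ` are mutually inverse, as `φ` ignores the values on `T`.
  calc #{c : α → β | ∀ a ∈ T, c a = φ c}
      = #(Fintype.piFinset fun a => if a ∈ T then {b₀} else univ) := by
        refine card_bij' (fun c _ => fill (fun _ => b₀) c) (fun c _ => fill φ c) ?_ ?_ ?_ ?_ <;>
          intro c hc <;>
          simp only [mem_filter, mem_univ, true_and, Fintype.mem_piFinset] at hc ⊢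
        · intro a; by_cases ha : a ∈ T <;> simp [fill, ha]
        · intro a ha; simp [fill, ha, hφ_fill]
        · ext a; by_cases ha : a ∈ T <;> simp [fill, ha, hφ_fill, hc a]
        · ext a; specialize hc a; by_cases ha : a ∈ T <;> simp_all [fill]
    _ = Fintype.card β ^ #Tᶜ := by
        simp [Fintype.card_piFinset, apply_ite card, prod_ite, filter_not, compl_eq_univ_sdiff]

def sym2Support {α : Type*} [DecidableEq α] (S : Finset (Sym2 α)) : Finset α :=
  S.biUnion Sym2.toFinset

theorem IsMatchingSet.subset {n : ℕ} {M S : Finset (Sym2 (Fin n))} (hM : IsMatchingSet M)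
    (hS : S ⊆ M) : IsMatchingSet S :=
  ⟨fun e he => hM.1 e (hS he), fun e he f hf => hM.2 e (hS he) f (hS hf)⟩

theorem isMatchingSet_singleton {n : ℕ} {e : Sym2 (Fin n)} (he : ¬ e.IsDiag) :
    IsMatchingSet {e} :=
  ⟨by simpa using he, by simp⟩

theorem IsMatchingSet.card_sym2Support {n : ℕ} {S : Finset (Sym2 (Fin n))}
    (hS : IsMatchingSet S) : #(sym2Support S) = 2 * #S := by
  rw [sym2Support, card_biUnion,
    sum_congr rfl fun e he => Sym2.card_toFinset_of_not_isDiag e (hS.1 e he), sum_const,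
    smul_eq_mul, mul_comm]
  exact fun e he f hf hef => disjoint_left.2 fun v hve hvf =>
    hS.2 e he f hf hef v (Sym2.mem_toFinset.1 hve) (Sym2.mem_toFinset.1 hvf)

section SC

variable {n : ℕ}

theorem pr_SC (P : SimpleGraph (Fin n) → Prop) :
    pr (SC n) P = #{c : Fin n → Bool | P (scGraph c)} / 2 ^ n := by
  rw [pr, card_eq_sum_card_fiberwise (f := scGraph) (t := {G | P G})
    (fun c hc => by simpa using hc), Nat.cast_sum, sum_div, sum_filter]
  refine sum_congr rfl fun G _ => ?_
  split_ifs with hG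
  · rw [SC, filter_filter]
    congr 3
    ext c
    simp only [mem_filter, mem_univ, true_and]
    exact ⟨fun h => ⟨h ▸ hG, h⟩, And.right⟩
  · rfl

theorem pr_SC_pos {P : SimpleGraph (Fin n) → Prop} (c : Fin n → Bool) (hc : P (scGraph c)) :
    0 < pr (SC n) P := by
  rw [pr_SC]
  exact div_pos (by exact_mod_cast card_pos.2 ⟨c, by simpa using hc⟩) (by positivity)

variable (hodd : Odd n)
include hodd

theorem scGraph_adj_iff (c : Fin n → Bool) (x y : Fin n) :
    (scGraph c).Adj x y ↔ x ≠ y ∧ c x = evenColor univ c ∧ c y = evenColor univ c := by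
  change x ≠ y ∧ c x = c y ∧ Even #{w | c w = c x} ↔ _
  rw [even_card_filter_eq_iff (by simpa using hodd)]
  constructor
  · rintro ⟨hxy, hcxy, hx⟩; exact ⟨hxy, hx, hcxy ▸ hx⟩
  · rintro ⟨hxy, hx, hy⟩; exact ⟨hxy, hx.trans hy.symm, hx⟩

theorem exists_ne_evenColor_univ (c : Fin n → Bool) : ∃ x, c x ≠ evenColor univ c := by
  by_contra! h
  have heven := (even_card_filter_eq_iff (by simpa using hodd) c (evenColor univ c)).2 rfl
  rw [filter_true_of_mem fun x _ => h x, card_univ, Fintype.card_fin] at heven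
  exact Nat.not_even_iff_odd.2 hodd heven

theorem scGraph_decide_mem_adj_iff {A : Finset (Fin n)} (hA : Even #A) (x y : Fin n) :
    (scGraph fun v => decide (v ∈ A)).Adj x y ↔ x ≠ y ∧ x ∈ A ∧ y ∈ A := by
  have hE : evenColor univ (fun v => decide (v ∈ A)) = true :=
    ((even_card_filter_eq_iff (by simpa using hodd) _ true).1 (by simpa using hA)).symm
  simp [scGraph_adj_iff hodd, hE]


theorem mem_edgeSet_scGraph_iff (c : Fin n → Bool) {e : Sym2 (Fin n)} (he : ¬ e.IsDiag) :
    e ∈ (scGraph c).edgeSet ↔ ∀ v ∈ e, c v = evenColor univ c := by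
  induction e using Sym2.ind with
  | _ x y => simp_all [scGraph_adj_iff hodd]

theorem pr_SC_forall_mem_edgeSet {S : Finset (Sym2 (Fin n))} (hS : IsMatchingSet S) :
    pr (SC n) (fun G => ∀ e ∈ S, e ∈ G.edgeSet) = (1 / 4) ^ #S := by
  set T := sym2Support S
  have hT : #T = 2 * #S := hS.card_sym2Support
  have hevent (c : Fin n → Bool) :
      (∀ e ∈ S, e ∈ (scGraph c).edgeSet) ↔ ∀ v ∈ T, c v = evenColor Tᶜ c := by
    rw [← forall_mem_eq_evenColor_univ_iff (by simp [hT]) (by simpa using hodd)]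
    constructor
    · intro h v hv
      obtain ⟨e, he, hve⟩ := mem_biUnion.1 hv
      exact (mem_edgeSet_scGraph_iff hodd c (hS.1 e he)).1 (h e he) v (Sym2.mem_toFinset.1 hve)
    · intro h e he
      exact (mem_edgeSet_scGraph_iff hodd c (hS.1 e he)).2 fun v hve =>
        h v (mem_biUnion.2 ⟨e, he, Sym2.mem_toFinset.2 hve⟩)
  have hcount : #{c : Fin n → Bool | ∀ v ∈ T, c v = evenColor Tᶜ c} = 2 ^ #Tᶜ := by
    convert card_filter_forall_mem_eq_of_eqOn_compl T _
      fun c d h => evenColor_congr fun v hv => h v (mem_compl.1 hv)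
    exact Fintype.card_bool.symm
  rw [pr_SC]
  simp only [hevent]
  have hle : 2 * #S ≤ n := by simpa [hT] using card_le_univ T
  rw [hcount, card_compl, Fintype.card_fin, hT, Nat.cast_pow, Nat.cast_ofNat,
    pow_sub₀ _ two_ne_zero hle, pow_mul]
  field_simp
  rw [← mul_pow]
  norm_num

theorem matchingIndep_SC : MatchingIndep (SC n) := by
  intro M hM S hSM
  have hedge (e) (he : e ∈ S) : pr (SC n) (fun G => e ∈ G.edgeSet) = 1 / 4 := by
    simpa using pr_SC_forall_mem_edgeSet hodd (isMatchingSet_singleton (hM.1 e (hSM he)))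
  rw [pr_SC_forall_mem_edgeSet hodd (hM.subset hSM), prod_congr rfl hedge, prod_const]

theorem not_isClique_compl_pair_and_adj {u v : Fin n} (hW : ({u, v}ᶜ : Set (Fin n)).Nontrivial)
    (c : Fin n → Bool) : ¬ ((scGraph c).IsClique {u, v}ᶜ ∧ (scGraph c).Adj u v) := by
  rintro ⟨hclique, hadj⟩
  rw [scGraph_adj_iff hodd] at hadj
  obtain ⟨x, hx⟩ := exists_ne_evenColor_univ hodd c
  by_cases hxu : x = u
  · exact hx (hxu ▸ hadj.2.1)
  by_cases hxv : x = v
  · exact hx (hxv ▸ hadj.2.2)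
  have hxW : x ∈ ({u, v}ᶜ : Set (Fin n)) := by simp [hxu, hxv]
  obtain ⟨y, hyW, hyx⟩ := hW.exists_ne x
  exact hx ((scGraph_adj_iff hodd c x y).1 (hclique hxW hyW hyx.symm)).2.1

theorem not_edgeSubgraphIndep_SC (hn : 5 ≤ n) : ¬ EdgeSubgraphIndep (SC n) := by
  intro h
  let u : Fin n := ⟨0, by omega⟩
  let v : Fin n := ⟨1, by omega⟩
  let W : Set (Fin n) := {u, v}ᶜ
  have huv : u ≠ v := by simp [u, v, Fin.ext_iff]
  have hW : W.Nontrivial :=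
    ⟨⟨2, by omega⟩, by simp [W, u, v, Fin.ext_iff], ⟨3, by omega⟩,
      by simp [W, u, v, Fin.ext_iff], by simp [Fin.ext_iff]⟩
  have hindep := h u v huv W (by simp [W]) (by simp [W]) ⊤
  simp only [SimpleGraph.induce_eq_top] at hindep
  have hjoint : pr (SC n) (fun G => G.IsClique W ∧ G.Adj u v) = 0 := by
    simp only [pr_SC, div_eq_zero_iff, Nat.cast_eq_zero, card_eq_zero, filter_eq_empty_iff]
    exact .inl fun c _ => not_isClique_compl_pair_and_adj hodd hW c
  have hW_pos : 0 < pr (SC n) (fun G => G.IsClique W) := by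
    have hA : Even #({v}ᶜ : Finset (Fin n)) := by
      rw [card_compl, card_singleton, Fintype.card_fin]; exact Nat.Odd.sub_odd hodd odd_one
    refine pr_SC_pos (fun x => decide (x ∈ ({v}ᶜ : Finset (Fin n)))) fun x hx y hy hxy => ?_
    exact (scGraph_decide_mem_adj_iff hodd hA x y).2 ⟨hxy, by simp_all [W], by simp_all [W]⟩
  have huv_pos : 0 < pr (SC n) (fun G => G.Adj u v) := by
    have hA : Even #({u, v} : Finset (Fin n)) := by simp [card_pair huv]
    refine pr_SC_pos (fun x => decide (x ∈ ({u, v} : Finset (Fin n)))) ?_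
    exact (scGraph_decide_mem_adj_iff hodd hA u v).2 ⟨huv, by simp, by simp⟩
  rw [hjoint] at hindep
  exact (mul_pos hW_pos huv_pos).ne hindep

end SC

theorem SC_matching_not_edge_subgraph (n : ℕ) (hodd : Odd n) (hn : 5 ≤ n) :
    MatchingIndep (SC n) ∧ ¬ EdgeSubgraphIndep (SC n) :=
  ⟨matchingIndep_SC hodd, not_edgeSubgraphIndep_SC hodd hn⟩
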